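/- Let K be a field, I ⊆ K[x_1,…,x_n] an ideal, and ω ∈ (ℝ_{>0})^n a strictly positive vector. Then In_ω I is a monomial ideal (i.e. generated by a set of monomials) if and only if the Gröbner cone C_ω(I) has maximal dimension n, i.e. the set {u ∈ (ℝ_{≥0})^n : In_u I = In_ω I} has nonempty interior in ℝ^n. -/

import Mathlib

open MvPolynomial Matrix

open Classical in
/-- The `w`-initial part of a multivariate polynomial: the sum of the terms whose
exponents have minimal `w`-weight among the exponents of `f`. -/
noncomputable def initialPart {n : ℕ} {K : Type*} [CommSemiring K] (w : Fin n → ℝ)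
    (f : MvPolynomial (Fin n) K) : MvPolynomial (Fin n) K :=
  ∑ μ ∈ f.support,
    if ∀ ν ∈ f.support, ∑ i, w i * (μ i : ℝ) ≤ ∑ i, w i * (ν i : ℝ)
    then monomial μ (f.coeff μ) else 0

/-- The `w`-initial ideal of an ideal `I`: the ideal generated by the `w`-initial
parts of the nonzero elements of `I`. -/
noncomputable def initialIdeal {n : ℕ} {K : Type*} [CommSemiring K] (w : Fin n → ℝ)
    (I : Ideal (MvPolynomial (Fin n) K)) : Ideal (MvPolynomial (Fin n) K) :=
  Ideal.span {g | ∃ f ∈ I, f ≠ 0 ∧ g = initialPart w f}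

/-- The Gröbner cone of `I` at `w`: the closure in `ℝ^n` of the set of nonnegative
vectors `u` with `In_u I = In_w I`. -/
noncomputable def groebnerCone {n : ℕ} {K : Type*} [CommSemiring K] (w : Fin n → ℝ)
    (I : Ideal (MvPolynomial (Fin n) K)) : Set (Fin n → ℝ) :=
  closure {u : Fin n → ℝ | (∀ i, 0 ≤ u i) ∧ initialIdeal u I = initialIdeal w I}

/-!
If `In_ω I` is generated by monomials `x^a` (finitely many, by noetherianity), each of them lifts
to some `f_a ∈ I` with `In_ω f_a = x^a`. Having a given single-term initial form is an open
condition on the weight, so `In_u f_a = x^a` for all `u` near `ω`, whence `In_ω I ⊆ In_u I`.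
If some `In_u f` had a term outside `In_ω I`, one could keep subtracting multiples of the `f_a`
from `f` to raise its `ω`-order without touching that term; since `ω > 0`, only finitely many
`ω`-orders lie below the weight of that term, a contradiction. Hence `In_u I = In_ω I`.

If instead `In_u I = In_ω I` for all `u` in an open set, pick such a `u` whose weight separates the
finitely many exponents of a given `g ∈ In_ω I` (the bad `u` lie on finitely many hyperplanes).
Since `In_u I` contains the `u`-homogeneous components of its elements, every term of `g` lies in
`In_ω I`.
-/

open Filter Topology MeasureTheory

section Weights

variable {σ : Type*}

lemma finite_setOf_weight_le [Fintype σ] {w : σ → ℝ} (hw : ∀ i, 0 < w i) (B : ℝ) :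
    {μ : σ →₀ ℕ | Finsupp.weight w μ ≤ B}.Finite := by
  classical
  refine (Set.finite_Iic (Finsupp.equivFunOnFinite.symm fun i => ⌈B / w i⌉₊)).subset
    fun μ hμ => Finsupp.le_def.2 fun i => ?_
  have hi : w i * μ i ≤ Finsupp.weight w μ := by
    rw [Finsupp.weight_apply, Finsupp.sum_fintype _ _ (by simp)]
    simpa [mul_comm] using Finset.single_le_sum (f := fun j => (μ j : ℝ) * w j)
      (fun j _ => mul_nonneg (Nat.cast_nonneg _) (hw j).le) (Finset.mem_univ i)
  have : (μ i : ℝ) ≤ B / w i := by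
    rw [le_div_iff₀ (hw i), mul_comm]
    exact hi.trans hμ
  exact_mod_cast this.trans (Nat.le_ceil _)

lemma continuous_weight (μ : σ →₀ ℕ) :
    Continuous fun u : σ → ℝ => Finsupp.weight u μ := by
  simp only [Finsupp.weight_apply, Finsupp.sum]
  fun_prop

lemma exists_mem_injOn_weight [Fintype σ] {U : Set (σ → ℝ)} (hU : IsOpen U) (hne : U.Nonempty)
    (s : Finset (σ →₀ ℕ)) : ∃ u ∈ U, Set.InjOn (Finsupp.weight u) (s : Set (σ →₀ ℕ)) := by
  classical
  let H (p : (σ →₀ ℕ) × (σ →₀ ℕ)) : Submodule ℝ (σ → ℝ) :=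
    LinearMap.ker (∑ i, ((p.1 i : ℝ) - p.2 i) • LinearMap.proj i)
  have hH (p : (σ →₀ ℕ) × (σ →₀ ℕ)) (u : σ → ℝ) :
      u ∈ H p ↔ Finsupp.weight u p.1 = Finsupp.weight u p.2 := by
    simp [H, Finsupp.weight_apply, Finsupp.sum_fintype, sub_mul, sub_eq_zero]
  have hHtop (p : (σ →₀ ℕ) × (σ →₀ ℕ)) (hp : p.1 ≠ p.2) : H p ≠ ⊤ := by
    obtain ⟨i, hi⟩ := Finsupp.ne_iff.1 hp
    intro htop
    have h := (hH p (Pi.single i 1)).1 (htop ▸ Submodule.mem_top)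
    simp only [Finsupp.weight_single_index, nsmul_eq_mul, mul_one] at h
    exact hi (by exact_mod_cast h)
  let P := (s ×ˢ s).filter fun p => p.1 ≠ p.2
  have hnull : volume (⋃ p ∈ P, (H p : Set (σ → ℝ))) = 0 :=
    (measure_biUnion_null_iff P.countable_toSet).2 fun p hp =>
      Measure.addHaar_submodule volume _ (hHtop p (Finset.mem_filter.1 hp).2)
  obtain ⟨u, huU, hu⟩ : (U \ ⋃ p ∈ P, (H p : Set (σ → ℝ))).Nonempty := by
    refine nonempty_of_measure_ne_zero (μ := volume) ?_
    rw [measure_sdiff_null hnull]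
    exact (hU.measure_pos volume hne).ne'
  refine ⟨u, huU, fun μ hμ ν hν hμν => by_contra fun hμν' => hu ?_⟩
  exact Set.mem_biUnion (Finset.mem_filter.2 ⟨Finset.mk_mem_product hμ hν, hμν'⟩)
    ((hH (μ, ν) u).2 hμν)

end Weights

section WeightGE

variable {σ R : Type*} [CommSemiring R]

noncomputable def weightGE (u : σ → ℝ) (t : ℝ) : Submodule R (MvPolynomial σ R) :=
  restrictSupport R {μ | t ≤ Finsupp.weight u μ}

lemma mem_weightGE {u : σ → ℝ} {t : ℝ} {f : MvPolynomial σ R} :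
    f ∈ weightGE u t ↔ ∀ μ ∈ f.support, t ≤ Finsupp.weight u μ :=
  mem_restrictSupport_iff R

lemma weightGE_anti {u : σ → ℝ} {s t : ℝ} (h : s ≤ t) :
    (weightGE u t : Submodule R (MvPolynomial σ R)) ≤ weightGE u s :=
  restrictSupport_mono R fun _ hμ => h.trans hμ

lemma monomial_mul_mem_weightGE {u : σ → ℝ} {t : ℝ} {f : MvPolynomial σ R}
    (hf : f ∈ weightGE u t) (μ : σ →₀ ℕ) (r : R) :
    monomial μ r * f ∈ weightGE u (Finsupp.weight u μ + t) := by
  classical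
  refine mem_weightGE.2 fun ν hν => ?_
  rw [mem_support_iff, coeff_monomial_mul'] at hν
  split_ifs at hν with hμν
  · rw [← tsub_add_cancel_of_le hμν, map_add, add_comm (Finsupp.weight u (ν - μ))]
    exact add_le_add_right (mem_weightGE.1 hf _ (mem_support_iff.2 (right_ne_zero_of_mul hν))) _
  · exact absurd rfl hν

lemma weightedHomogeneousComponent_eq_zero_of_lt {u : σ → ℝ} {s t : ℝ} {f : MvPolynomial σ R}
    (hf : f ∈ weightGE u s) (h : t < s) : weightedHomogeneousComponent u t f = 0 :=
  weightedHomogeneousComponent_eq_zero' t f fun μ hμ => (h.trans_le (mem_weightGE.1 hf μ hμ)).ne'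

lemma le_of_weightedHomogeneousComponent_ne_zero {u : σ → ℝ} {s t : ℝ} {f : MvPolynomial σ R}
    (hf : f ∈ weightGE u s) (h : weightedHomogeneousComponent u t f ≠ 0) : s ≤ t :=
  not_lt.1 fun hts => h (weightedHomogeneousComponent_eq_zero_of_lt hf hts)

lemma exists_weight_eq_of_weightedHomogeneousComponent_ne_zero {u : σ → ℝ} {t : ℝ}
    {f : MvPolynomial σ R} (h : weightedHomogeneousComponent u t f ≠ 0) :
    ∃ μ ∈ f.support, Finsupp.weight u μ = t := by
  classical
  obtain ⟨μ, hμ⟩ := support_nonempty.2 h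
  rw [support_weightedHomogeneousComponent, Finset.mem_filter] at hμ
  exact ⟨μ, hμ⟩

lemma weightedHomogeneousComponent_mem_weightGE {u : σ → ℝ} {s : ℝ} {f : MvPolynomial σ R}
    (hf : f ∈ weightGE u s) (v : σ → ℝ) (t : ℝ) :
    weightedHomogeneousComponent v t f ∈ weightGE u s := by
  classical
  refine mem_weightGE.2 fun μ hμ => mem_weightGE.1 hf μ ?_
  rw [support_weightedHomogeneousComponent] at hμ
  exact (Finset.mem_filter.1 hμ).1

lemma weightedHomogeneousComponent_monomial_mul (u : σ → ℝ) (t : ℝ) (μ : σ →₀ ℕ) (r : R)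
    (f : MvPolynomial σ R) :
    weightedHomogeneousComponent u (Finsupp.weight u μ + t) (monomial μ r * f)
      = monomial μ r * weightedHomogeneousComponent u t f := by
  classical
  ext ν
  simp only [coeff_weightedHomogeneousComponent, coeff_monomial_mul']
  by_cases hμν : μ ≤ ν
  · obtain ⟨κ, rfl⟩ := le_iff_exists_add.1 hμν
    simp [map_add]
  · simp [hμν]

lemma weightedHomogeneousComponent_eq_monomial {u : σ → ℝ} {f : MvPolynomial σ R}
    {μ : σ →₀ ℕ} (h : ∀ ν ∈ f.support, Finsupp.weight u ν = Finsupp.weight u μ → ν = μ) :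
    weightedHomogeneousComponent u (Finsupp.weight u μ) f = monomial μ (coeff μ f) := by
  classical
  ext ν
  rw [coeff_weightedHomogeneousComponent, coeff_monomial]
  by_cases hν : ν ∈ f.support
  · split_ifs with h₁ h₂ h₂
    · rw [h₂]
    · exact absurd (h ν hν h₁).symm h₂
    · exact absurd (h₂ ▸ rfl) h₁
    · rfl
  · rw [notMem_support_iff.1 hν]
    split_ifs with h₁ h₂ <;> simp_all

lemma exists_mem_weightGE_weightedHomogeneousComponent_ne_zero (u : σ → ℝ)
    {f : MvPolynomial σ R} (hf : f ≠ 0) :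
    ∃ t, f ∈ weightGE u t ∧ weightedHomogeneousComponent u t f ≠ 0 := by
  classical
  obtain ⟨μ, hμ, hmin⟩ := f.support.exists_min_image (Finsupp.weight u) (support_nonempty.2 hf)
  refine ⟨Finsupp.weight u μ, mem_weightGE.2 hmin, fun h => mem_support_iff.1 hμ ?_⟩
  simpa [coeff_weightedHomogeneousComponent] using congr_arg (coeff μ) h

lemma finite_orders_of_forall_mem_support [Fintype σ] {w : σ → ℝ} (hw : ∀ i, 0 < w i)
    {S : Set (MvPolynomial σ R)} {τ : σ →₀ ℕ} (hS : ∀ g ∈ S, τ ∈ g.support) :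
    {t | ∃ g ∈ S, g ∈ weightGE w t ∧ weightedHomogeneousComponent w t g ≠ 0}.Finite := by
  refine ((finite_setOf_weight_le hw (Finsupp.weight w τ)).image (Finsupp.weight w)).subset ?_
  rintro t ⟨g, hgS, hgt, hne⟩
  obtain ⟨μ, -, rfl⟩ := exists_weight_eq_of_weightedHomogeneousComponent_ne_zero hne
  exact ⟨μ, mem_weightGE.1 hgt τ (hS g hgS), rfl⟩

end WeightGE

section MonomialIdeal

variable {σ R : Type*} [CommRing R]

lemma coeff_eq_zero_of_mem_span_monomial {A : Set (σ →₀ ℕ)} {p : MvPolynomial σ R}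
    (hp : p ∈ Ideal.span ((fun a => monomial a (1 : R)) '' A)) {τ : σ →₀ ℕ}
    (hτ : ∀ a ∈ A, ¬a ≤ τ) : coeff τ p = 0 := by
  by_contra h
  obtain ⟨a, ha, haτ⟩ := mem_ideal_span_monomial_image.1 hp τ (mem_support_iff.2 h)
  exact hτ a ha haτ

lemma exists_finset_span_monomial_eq [Finite σ] [IsNoetherianRing R] (S : Set (σ →₀ ℕ)) :
    ∃ A : Finset (σ →₀ ℕ),
      Ideal.span ((fun a => monomial a (1 : R)) '' S) =
        Ideal.span ((fun a => monomial a (1 : R)) '' A) := by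
  classical
  obtain ⟨s, hsS, hspan⟩ := (Submodule.fg_span_iff_fg_span_finset_subset _).1
    (IsNoetherian.noetherian (Ideal.span ((fun a => monomial a (1 : R)) '' S)))
  obtain ⟨A, -, rfl⟩ := Finset.subset_set_image_iff.1 hsS
  exact ⟨A, by rw [← Finset.coe_image]; exact hspan⟩

end MonomialIdeal

section InitialPart

variable {n : ℕ} {R : Type*} [CommSemiring R]

lemma weight_eq_sum (u : Fin n → ℝ) (μ : Fin n →₀ ℕ) :
    Finsupp.weight u μ = ∑ i, u i * (μ i : ℝ) := by
  rw [Finsupp.weight_apply, Finsupp.sum_fintype _ _ (by simp)]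
  simp [mul_comm]

lemma coeff_initialPart (u : Fin n → ℝ) (f : MvPolynomial (Fin n) R) (τ : Fin n →₀ ℕ) :
    coeff τ (initialPart u f) =
      if ∀ ν ∈ f.support, Finsupp.weight u τ ≤ Finsupp.weight u ν then coeff τ f else 0 := by
  classical
  simp only [initialPart, ← weight_eq_sum, coeff_sum]
  rw [Finset.sum_eq_single τ]
  · split_ifs <;> simp
  · intro μ _ hμτ
    split_ifs <;> simp [coeff_monomial, hμτ]
  · intro hτ
    simp [notMem_support_iff.1 hτ]

@[simp]
lemma initialPart_zero (u : Fin n → ℝ) : initialPart u (0 : MvPolynomial (Fin n) R) = 0 := by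
  simp [initialPart]

lemma initialPart_eq_weightedHomogeneousComponent {u : Fin n → ℝ} {t : ℝ}
    {f : MvPolynomial (Fin n) R} (hf : f ∈ weightGE u t)
    (h : weightedHomogeneousComponent u t f ≠ 0) :
    initialPart u f = weightedHomogeneousComponent u t f := by
  obtain ⟨μ, hμ⟩ := exists_weight_eq_of_weightedHomogeneousComponent_ne_zero h
  ext τ
  rw [coeff_initialPart, coeff_weightedHomogeneousComponent]
  by_cases hτ : τ ∈ f.support
  · have hmin := mem_weightGE.1 hf
    refine if_congr ⟨fun h => le_antisymm (hμ.2 ▸ h μ hμ.1) (hmin τ hτ), ?_⟩ rfl rfl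
    exact fun h ν hν => h ▸ hmin ν hν
  · simp [notMem_support_iff.1 hτ]

lemma mem_weightGE_of_initialPart_eq {v : Fin n → ℝ} {t : ℝ} {F g : MvPolynomial (Fin n) R}
    (h : initialPart v F = g) (hg : g.IsWeightedHomogeneous v t) (hg0 : g ≠ 0) :
    F ∈ weightGE v t ∧ weightedHomogeneousComponent v t F = g := by
  have hF0 : F ≠ 0 := by rintro rfl; exact hg0 (by simp [← h])
  obtain ⟨s, hFs, hne⟩ := exists_mem_weightGE_weightedHomogeneousComponent_ne_zero v hF0
  rw [initialPart_eq_weightedHomogeneousComponent hFs hne] at h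
  obtain rfl : s = t :=
    (h ▸ weightedHomogeneousComponent_isWeightedHomogeneous s F).inj_right hg0 hg
  exact ⟨hFs, h⟩

lemma monomial_mul_mem_weightGE_of_initialPart_eq [Nontrivial R] {v : Fin n → ℝ}
    {F : MvPolynomial (Fin n) R} {a τ : Fin n →₀ ℕ} (h : initialPart v F = monomial a 1)
    (haτ : a ≤ τ) (r : R) :
    monomial (τ - a) r * F ∈ weightGE v (Finsupp.weight v τ) ∧
      weightedHomogeneousComponent v (Finsupp.weight v τ) (monomial (τ - a) r * F) =
        monomial τ r := by
  obtain ⟨hFa, hFwhc⟩ := mem_weightGE_of_initialPart_eq h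
    (isWeightedHomogeneous_monomial _ _ _ rfl) (monomial_eq_zero.not.2 one_ne_zero)
  have hτ : Finsupp.weight v τ = Finsupp.weight v (τ - a) + Finsupp.weight v a := by
    rw [← map_add, tsub_add_cancel_of_le haτ]
  rw [hτ, weightedHomogeneousComponent_monomial_mul, hFwhc, monomial_mul, mul_one,
    tsub_add_cancel_of_le haτ]
  exact ⟨monomial_mul_mem_weightGE hFa _ r, rfl⟩

lemma initialPart_eq_monomial_iff {u : Fin n → ℝ} {f : MvPolynomial (Fin n) R}
    {a : Fin n →₀ ℕ} {r : R} (hr : r ≠ 0) :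
    initialPart u f = monomial a r ↔
      coeff a f = r ∧ ∀ ν ∈ f.support.erase a, Finsupp.weight u a < Finsupp.weight u ν := by
  classical
  constructor
  · intro h
    have hcoeff := congr_arg (coeff a) h
    rw [coeff_initialPart, coeff_monomial, if_pos rfl] at hcoeff
    split_ifs at hcoeff with hmin
    · refine ⟨hcoeff, fun ν hν => ?_⟩
      obtain ⟨hνa, hν⟩ := Finset.mem_erase.1 hν
      have hcoeffν := congr_arg (coeff ν) h
      rw [coeff_initialPart, coeff_monomial, if_neg (Ne.symm hνa)] at hcoeffν
      split_ifs at hcoeffν with hνmin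
      · exact absurd hcoeffν (mem_support_iff.1 hν)
      · push Not at hνmin
        obtain ⟨ρ, hρ, hlt⟩ := hνmin
        exact (hmin ρ hρ).trans_lt hlt
    · exact absurd hcoeff.symm hr
  · rintro ⟨hcoeff, hlt⟩
    have ha : a ∈ f.support := mem_support_iff.2 (hcoeff ▸ hr)
    ext τ
    rw [coeff_initialPart, coeff_monomial]
    by_cases hτa : τ = a
    · subst hτa
      rw [if_pos fun ν hν => ?_, if_pos rfl, hcoeff]
      rcases eq_or_ne ν τ with rfl | hντ
      · exact le_rfl
      · exact (hlt ν (Finset.mem_erase.2 ⟨hντ, hν⟩)).le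
    · rw [if_neg (Ne.symm hτa)]
      by_cases hτ : τ ∈ f.support
      · exact if_neg fun hmin => (hmin a ha).not_gt (hlt τ (Finset.mem_erase.2 ⟨hτa, hτ⟩))
      · simp [notMem_support_iff.1 hτ]

lemma eventually_initialPart_eq_monomial {w : Fin n → ℝ} {f : MvPolynomial (Fin n) R}
    {a : Fin n →₀ ℕ} {r : R} (hr : r ≠ 0)
    (h : initialPart w f = monomial a r) : ∀ᶠ u in 𝓝 w, initialPart u f = monomial a r := by
  obtain ⟨hcoeff, hlt⟩ := (initialPart_eq_monomial_iff hr).1 h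
  have hev : ∀ᶠ u in 𝓝 w, ∀ ν ∈ f.support.erase a, Finsupp.weight u a < Finsupp.weight u ν :=
    (eventually_all_finset _).2 fun ν hν => (continuous_weight a).continuousAt.eventually_lt
      (continuous_weight ν).continuousAt (hlt ν hν)
  exact hev.mono fun u hu => (initialPart_eq_monomial_iff hr).2 ⟨hcoeff, hu⟩

lemma initialPart_mem_initialIdeal (u : Fin n → ℝ) {I : Ideal (MvPolynomial (Fin n) R)}
    {f : MvPolynomial (Fin n) R} (hf : f ∈ I) : initialPart u f ∈ initialIdeal u I := by
  rcases eq_or_ne f 0 with rfl | hf0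
  · simp
  · exact Ideal.subset_span ⟨f, hf, hf0, rfl⟩

end InitialPart

section InitialForms

variable {n : ℕ} {R : Type*} [CommSemiring R]

-- The degree-`c` component of `In_u I`, presented as a submodule (the set `initialPart u '' I`
-- is not closed under addition).
noncomputable def initialForms (u : Fin n → ℝ) (I : Ideal (MvPolynomial (Fin n) R)) (c : ℝ) :
    Submodule R (MvPolynomial (Fin n) R) :=
  (I.restrictScalars R ⊓ weightGE u c).map (weightedHomogeneousComponent u c)

variable {u : Fin n → ℝ} {I : Ideal (MvPolynomial (Fin n) R)}

lemma exists_initialPart_eq_of_mem_initialForms {c : ℝ} {g : MvPolynomial (Fin n) R}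
    (hg : g ∈ initialForms u I c) : ∃ f ∈ I, initialPart u f = g := by
  obtain ⟨f, ⟨hfI, hfc⟩, rfl⟩ := hg
  by_cases h : weightedHomogeneousComponent u c f = 0
  · exact ⟨0, I.zero_mem, by simp [h]⟩
  · exact ⟨f, hfI, initialPart_eq_weightedHomogeneousComponent hfc h⟩

lemma monomial_mul_mem_initialForms {c : ℝ} {g : MvPolynomial (Fin n) R}
    (hg : g ∈ initialForms u I c) (μ : Fin n →₀ ℕ) (r : R) :
    monomial μ r * g ∈ initialForms u I (Finsupp.weight u μ + c) := by
  obtain ⟨f, ⟨hfI, hfc⟩, rfl⟩ := hg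
  exact ⟨monomial μ r * f, ⟨I.mul_mem_left _ hfI, monomial_mul_mem_weightGE hfc μ r⟩,
    weightedHomogeneousComponent_monomial_mul u c μ r f⟩

lemma weightedHomogeneousComponent_mem_initialForms {g : MvPolynomial (Fin n) R}
    (hg : g ∈ initialIdeal u I) (c : ℝ) :
    weightedHomogeneousComponent u c g ∈ initialForms u I c := by
  classical
  induction hg using Submodule.span_induction generalizing c with
  | mem x hx =>
    obtain ⟨f, hfI, hf0, rfl⟩ := hx
    obtain ⟨t, hft, hne⟩ := exists_mem_weightGE_weightedHomogeneousComponent_ne_zero u hf0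
    rw [initialPart_eq_weightedHomogeneousComponent hft hne,
      weightedHomogeneousComponent_of_mem (weightedHomogeneousComponent_mem u f t)]
    split_ifs with hct
    · subst hct
      exact ⟨f, ⟨hfI, hft⟩, rfl⟩
    · exact zero_mem _
  | zero => simp
  | add x y _ _ hx hy => simpa using add_mem (hx c) (hy c)
  | smul a x _ hx =>
    rw [smul_eq_mul, a.as_sum, Finset.sum_mul, map_sum]
    refine Submodule.sum_mem _ fun μ _ => ?_
    have h := monomial_mul_mem_initialForms (hx (c - Finsupp.weight u μ)) μ (coeff μ a)
    rwa [add_sub_cancel, ← weightedHomogeneousComponent_monomial_mul, add_sub_cancel] at h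

lemma exists_initialPart_eq_weightedHomogeneousComponent {g : MvPolynomial (Fin n) R}
    (hg : g ∈ initialIdeal u I) (c : ℝ) :
    ∃ f ∈ I, initialPart u f = weightedHomogeneousComponent u c g :=
  exists_initialPart_eq_of_mem_initialForms (weightedHomogeneousComponent_mem_initialForms hg c)

end InitialForms

section Stability

variable {n : ℕ} {R : Type*} [CommRing R] [Nontrivial R] {u w : Fin n → ℝ}
  {I : Ideal (MvPolynomial (Fin n) R)} {A : Set (Fin n →₀ ℕ)}
  {F : (Fin n →₀ ℕ) → MvPolynomial (Fin n) R}

lemma exists_lift_of_mem_span_monomial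
    (hF : ∀ a ∈ A, F a ∈ I ∧ initialPart u (F a) = monomial a 1 ∧
      initialPart w (F a) = monomial a 1)
    {m t : ℝ} {p : MvPolynomial (Fin n) R}
    (hpJ : p ∈ Ideal.span ((fun a => monomial a (1 : R)) '' A))
    (hpw : p.IsWeightedHomogeneous w t) (hpu : p ∈ weightGE u m) :
    ∃ h ∈ I, h ∈ weightGE w t ∧ weightedHomogeneousComponent w t h = p ∧ h ∈ weightGE u m ∧
      weightedHomogeneousComponent u m h ∈ Ideal.span ((fun a => monomial a (1 : R)) '' A) := by
  classical
  set J := Ideal.span ((fun a => monomial a (1 : R)) '' A)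
  have hdiv := mem_ideal_span_monomial_image.1 hpJ
  choose! d hdA hdτ using hdiv
  have hu τ (hτ : τ ∈ p.support) :=
    monomial_mul_mem_weightGE_of_initialPart_eq (hF _ (hdA τ hτ)).2.1 (hdτ τ hτ) (coeff τ p)
  have hw τ (hτ : τ ∈ p.support) :=
    monomial_mul_mem_weightGE_of_initialPart_eq (hF _ (hdA τ hτ)).2.2 (hdτ τ hτ) (coeff τ p)
  have hwτ τ (hτ : τ ∈ p.support) : Finsupp.weight w τ = t := hpw (mem_support_iff.1 hτ)
  refine ⟨∑ τ ∈ p.support, monomial (τ - d τ) (coeff τ p) * F (d τ),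
    Ideal.sum_mem _ fun τ hτ => I.mul_mem_left _ (hF _ (hdA τ hτ)).1,
    Submodule.sum_mem _ fun τ hτ => hwτ τ hτ ▸ (hw τ hτ).1, ?_,
    Submodule.sum_mem _ fun τ hτ => weightGE_anti (mem_weightGE.1 hpu τ hτ) (hu τ hτ).1, ?_⟩
  · rw [map_sum]
    conv_rhs => rw [p.as_sum]
    exact Finset.sum_congr rfl fun τ hτ => hwτ τ hτ ▸ (hw τ hτ).2
  · rw [map_sum]
    refine Ideal.sum_mem _ fun τ hτ => ?_
    rcases (mem_weightGE.1 hpu τ hτ).eq_or_lt with rfl | hlt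
    · rw [(hu τ hτ).2]
      exact J.mem_of_dvd (monomial_dvd_monomial.2 ⟨Or.inr (hdτ τ hτ), one_dvd _⟩)
        (Ideal.subset_span ⟨d τ, hdA τ hτ, rfl⟩)
    · rw [weightedHomogeneousComponent_eq_zero_of_lt (hu τ hτ).1 hlt]
      exact J.zero_mem

lemma initialPart_mem_span_monomial_of_lifts (hw : ∀ i, 0 < w i)
    (hF : ∀ a ∈ A, F a ∈ I ∧ initialPart u (F a) = monomial a 1 ∧
      initialPart w (F a) = monomial a 1)
    (hJ : initialIdeal w I ≤ Ideal.span ((fun a => monomial a (1 : R)) '' A))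
    {f : MvPolynomial (Fin n) R} (hf : f ∈ I) :
    initialPart u f ∈ Ideal.span ((fun a => monomial a (1 : R)) '' A) := by
  classical
  set J := Ideal.span ((fun a => monomial a (1 : R)) '' A)
  by_contra hfJ
  obtain ⟨τ₀, hτ₀, hτ₀A⟩ : ∃ τ₀ ∈ (initialPart u f).support, ∀ a ∈ A, ¬a ≤ τ₀ := by
    simpa [J, mem_ideal_span_monomial_image] using hfJ
  have hf0 : f ≠ 0 := by rintro rfl; simp at hτ₀
  obtain ⟨m, hfm, hne⟩ := exists_mem_weightGE_weightedHomogeneousComponent_ne_zero u hf0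
  rw [initialPart_eq_weightedHomogeneousComponent hfm hne, support_weightedHomogeneousComponent,
    Finset.mem_filter] at hτ₀
  -- Members of `S` keep the coefficient of the standard monomial `x^τ₀` of `f`, so their
  -- `w`-orders are bounded by the weight of `τ₀`.
  let S := {g | g ∈ I ∧ g ∈ weightGE u m ∧
    weightedHomogeneousComponent u m g - weightedHomogeneousComponent u m f ∈ J}
  have hτ₀S : ∀ g ∈ S, τ₀ ∈ g.support := by
    rintro g ⟨-, -, hgJ⟩
    have h := coeff_eq_zero_of_mem_span_monomial hgJ hτ₀A
    rw [coeff_sub, coeff_weightedHomogeneousComponent, coeff_weightedHomogeneousComponent,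
      if_pos hτ₀.2, if_pos hτ₀.2, sub_eq_zero] at h
    exact mem_support_iff.2 (h ▸ mem_support_iff.1 hτ₀.1)
  let T := {t | ∃ g ∈ S, g ∈ weightGE w t ∧ weightedHomogeneousComponent w t g ≠ 0}
  have hTne : T.Nonempty := by
    obtain ⟨t, hft, hnet⟩ := exists_mem_weightGE_weightedHomogeneousComponent_ne_zero w hf0
    exact ⟨t, f, ⟨hf, hfm, by simp⟩, hft, hnet⟩
  obtain ⟨t, ⟨g, ⟨hgI, hgu, hgJ⟩, hgw, hgne⟩, hmax⟩ :=
    Set.exists_max_image T id (finite_orders_of_forall_mem_support hw hτ₀S) hTne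
  -- Reducing the `w`-initial form of `g` by the lifts `F a` stays in `S` but raises the `w`-order.
  have hInw := initialPart_eq_weightedHomogeneousComponent hgw hgne
  obtain ⟨h, hhI, hhw, hhwt, hhu, hhJ⟩ := exists_lift_of_mem_span_monomial hF
    (hInw ▸ hJ (initialPart_mem_initialIdeal w hgI))
    (weightedHomogeneousComponent_isWeightedHomogeneous t g)
    (weightedHomogeneousComponent_mem_weightGE hgu w t)
  have hS : g - h ∈ S := ⟨I.sub_mem hgI hhI, sub_mem hgu hhu, by
    rw [map_sub, sub_right_comm]; exact J.sub_mem hgJ hhJ⟩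
  obtain ⟨t', hgt', hne'⟩ :=
    exists_mem_weightGE_weightedHomogeneousComponent_ne_zero w (support_nonempty.1 ⟨τ₀, hτ₀S _ hS⟩)
  have hzero : weightedHomogeneousComponent w t (g - h) = 0 := by rw [map_sub, hhwt, sub_self]
  have htt' : t < t' := (le_of_weightedHomogeneousComponent_ne_zero (sub_mem hgw hhw) hne').lt_of_ne
    (by rintro rfl; exact hne' hzero)
  exact (hmax t' ⟨g - h, hS, hgt', hne'⟩).not_gt htt'

end Stability

lemma nonempty_interior_of_initialIdeal_eq_span_monomial {n : ℕ} {R : Type*} [CommRing R]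
    [IsNoetherianRing R] [Nontrivial R] {I : Ideal (MvPolynomial (Fin n) R)} {w : Fin n → ℝ}
    (hw : ∀ i, 0 < w i) {S : Set (Fin n →₀ ℕ)}
    (hS : initialIdeal w I = Ideal.span ((fun a => monomial a (1 : R)) '' S)) :
    (interior {u | (∀ i, 0 ≤ u i) ∧ initialIdeal u I = initialIdeal w I}).Nonempty := by
  obtain ⟨A, hA⟩ := exists_finset_span_monomial_eq (R := R) S
  rw [hA] at hS
  have hlift (a : Fin n →₀ ℕ) (ha : a ∈ A) : ∃ F ∈ I, initialPart w F = monomial a 1 := by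
    have hmem : monomial a (1 : R) ∈ initialIdeal w I := hS ▸ Ideal.subset_span ⟨a, ha, rfl⟩
    obtain ⟨F, hFI, hF⟩ :=
      exists_initialPart_eq_weightedHomogeneousComponent hmem (Finsupp.weight w a)
    exact ⟨F, hFI, hF.trans (weightedHomogeneousComponent_eq_self
      (isWeightedHomogeneous_monomial _ _ _ rfl))⟩
  choose! F hFI hFw using hlift
  have hpos : ∀ᶠ u in 𝓝 w, ∀ i, 0 < u i :=
    eventually_all.2 fun i => (isOpen_lt continuous_const (continuous_apply i)).mem_nhds (hw i)
  have hlifts : ∀ᶠ u in 𝓝 w, ∀ a ∈ A, initialPart u (F a) = monomial a 1 :=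
    (eventually_all_finset A).2 fun a ha =>
      eventually_initialPart_eq_monomial one_ne_zero (hFw a ha)
  refine ⟨w, mem_interior_iff_mem_nhds.2 ((hpos.and hlifts).mono fun u ⟨hu0, huF⟩ =>
    ⟨fun i => (hu0 i).le, le_antisymm ?_ ?_⟩)⟩
  · rw [hS, initialIdeal, Ideal.span_le]
    rintro _ ⟨f, hf, -, rfl⟩
    exact initialPart_mem_span_monomial_of_lifts hw (fun a ha => ⟨hFI a ha, huF a ha, hFw a ha⟩)
      hS.le hf
  · rw [hS, Ideal.span_le]
    rintro _ ⟨a, ha, rfl⟩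
    simpa only [SetLike.mem_coe, huF a ha] using initialPart_mem_initialIdeal u (hFI a ha)

lemma exists_initialIdeal_eq_span_monomial_of_nonempty_interior {n : ℕ} {K : Type*} [Field K]
    {I : Ideal (MvPolynomial (Fin n) K)} {w : Fin n → ℝ}
    (h : (interior {u | (∀ i, 0 ≤ u i) ∧ initialIdeal u I = initialIdeal w I}).Nonempty) :
    ∃ S : Set (Fin n →₀ ℕ),
      initialIdeal w I = Ideal.span ((fun a => monomial a (1 : K)) '' S) := by
  refine ⟨{μ | monomial μ 1 ∈ initialIdeal w I}, le_antisymm (fun g hg => ?_) ?_⟩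
  · refine mem_ideal_span_monomial_image.2 fun μ hμ => ⟨μ, ?_, le_rfl⟩
    obtain ⟨u, hu, hinj⟩ := exists_mem_injOn_weight isOpen_interior h g.support
    change monomial μ 1 ∈ initialIdeal w I
    rw [← (interior_subset hu).2] at hg ⊢
    obtain ⟨f, hf, hfg⟩ :=
      exists_initialPart_eq_weightedHomogeneousComponent hg (Finsupp.weight u μ)
    rw [weightedHomogeneousComponent_eq_monomial fun ν hν hνμ => hinj hν hμ hνμ] at hfg
    have h := (initialIdeal u I).mul_mem_left (C (coeff μ g)⁻¹)
      (hfg ▸ initialPart_mem_initialIdeal u hf)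
    rwa [C_mul_monomial, inv_mul_cancel₀ (mem_support_iff.1 hμ)] at h
  · rw [Ideal.span_le]
    rintro _ ⟨μ, hμ, rfl⟩
    exact hμ

/-- For a strictly positive `ω`, the initial ideal `In_ω I` is a monomial
ideal (generated by a set of monomials) if and only if the Gröbner cone `C_ω(I)` has
maximal dimension `n`, i.e. the set `{u ∈ (ℝ_{≥0})^n : In_u I = In_ω I}` has nonempty
interior in `ℝ^n`. -/
theorem initialIdeal_monomial_iff_maximal_dimension {n : ℕ} {K : Type*} [Field K]
    (I : Ideal (MvPolynomial (Fin n) K)) (w : Fin n → ℝ) (hw : ∀ i, 0 < w i) :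
    (∃ S : Set (Fin n →₀ ℕ),
        initialIdeal w I = Ideal.span ((fun a => (monomial a (1 : K))) '' S)) ↔
      (interior {u : Fin n → ℝ |
        (∀ i, 0 ≤ u i) ∧ initialIdeal u I = initialIdeal w I}).Nonempty :=
  ⟨fun ⟨_, hS⟩ => nonempty_interior_of_initialIdeal_eq_span_monomial hw hS,
    exists_initialIdeal_eq_span_monomial_of_nonempty_interior⟩
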